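/- Let T = {C₁ ⊑ D₁, …, Cₙ ⊑ Dₙ} be a terminology, R a set of role inclusion axioms, and C a SHIQ-concept. Let C_T be the conjunction of the concepts ¬Cᵢ ⊔ Dᵢ over all axioms of T, let U be a transitive role name not occurring in T, C, or R, and let R_U = R ∪ {R ⊑ U, Inv(R) ⊑ U : R occurs in T, C, or R}. Then C is satisfiable with respect to T and R⁺ if and only if C ⊓ C_T ⊓ ∀U.C_T is satisfiable with respect to R_U⁺. -/

import Mathlib

/-- SHIQ-roles: role names (indexed by ℕ) and their inverses. -/
inductive Role where
  | atom : ℕ → Role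
  | inv  : ℕ → Role
deriving DecidableEq

/-- The function `Inv` on roles: `Inv(R) = R⁻`, `Inv(R⁻) = R`. -/
def Role.Inv : Role → Role
  | .atom r => .inv r
  | .inv r  => .atom r

/-- The underlying role name of a (possibly inverse) role. -/
def Role.name : Role → ℕ
  | .atom r => r
  | .inv r  => r

/-- Concepts of the SHIQ family (with ⊤ and ⊥ for convenience). -/
inductive DLConcept where
  | top : DLConcept
  | bot : DLConcept
  | atom : ℕ → DLConcept
  | neg : DLConcept → DLConcept
  | and : DLConcept → DLConcept → DLConcept
  | or : DLConcept → DLConcept → DLConcept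
  | all : Role → DLConcept → DLConcept
  | ex : Role → DLConcept → DLConcept
  | atleast : ℕ → Role → DLConcept → DLConcept
  | atmost : ℕ → Role → DLConcept → DLConcept
deriving DecidableEq

/-- An interpretation: a (nonempty) domain, a valuation of concept names and
    of role names. -/
structure Interp where
  Dom : Type
  dom_nonempty : Nonempty Dom
  cI : ℕ → Set Dom
  rI : ℕ → Dom → Dom → Prop

/-- Semantics of (possibly inverse) roles. -/
def Interp.rSem (I : Interp) : Role → I.Dom → I.Dom → Prop
  | .atom r => I.rI r
  | .inv r  => fun x y => I.rI r y x

/-- Semantics of concepts; number restrictions are interpreted by counting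
    role successors (via cardinalities, so that infinite sets are handled
    correctly). -/
def Interp.cSem (I : Interp) : DLConcept → Set I.Dom
  | .top => Set.univ
  | .bot => ∅
  | .atom a => I.cI a
  | .neg C => (I.cSem C)ᶜ
  | .and C D => I.cSem C ∩ I.cSem D
  | .or C D => I.cSem C ∪ I.cSem D
  | .all R C => {x | ∀ y, I.rSem R x y → y ∈ I.cSem C}
  | .ex R C => {x | ∃ y, I.rSem R x y ∧ y ∈ I.cSem C}
  | .atleast n R C => {x | (n : Cardinal) ≤ Cardinal.mk {y // I.rSem R x y ∧ y ∈ I.cSem C}}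
  | .atmost n R C => {x | Cardinal.mk {y // I.rSem R x y ∧ y ∈ I.cSem C} ≤ (n : Cardinal)}

/-- `I.Good Rp`: the interpretation interprets every transitive role name
    (member of `Rp`) by a transitive relation. -/
def Interp.Good (I : Interp) (Rp : Set ℕ) : Prop :=
  ∀ r ∈ Rp, Transitive (I.rI r)

/-- The role hierarchy ⊑* generated by a finite set of role inclusion axioms:
    inverses are added and the transitive-reflexive closure is taken. -/
def SubRole (RIA : List (Role × Role)) : Role → Role → Prop :=
  Relation.ReflTransGen (fun R S => (R, S) ∈ RIA ∨ (R.Inv, S.Inv) ∈ RIA)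

/-- `I ⊨ R⁺`: the interpretation satisfies the role hierarchy. -/
def Interp.ModelsRH (I : Interp) (RIA : List (Role × Role)) : Prop :=
  ∀ R S, SubRole RIA R S → ∀ x y, I.rSem R x y → I.rSem S x y

/-- `Trans(R)`: a (possibly inverse) role is transitive iff its name is in `Rp`. -/
def RTrans (Rp : Set ℕ) : Role → Prop
  | .atom r => r ∈ Rp
  | .inv r  => r ∈ Rp

/-- A role is simple iff it is neither transitive nor has a transitive sub-role. -/
def SimpleRole (Rp : Set ℕ) (RIA : List (Role × Role)) (R : Role) : Prop :=
  ∀ S, SubRole RIA S R → ¬ RTrans Rp S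

/-- SHIQ-concepts: number restrictions occur only on simple roles. -/
def DLConcept.IsSHIQ (Rp : Set ℕ) (RIA : List (Role × Role)) : DLConcept → Prop
  | .top | .bot | .atom _ => True
  | .neg C => C.IsSHIQ Rp RIA
  | .and C D | .or C D => C.IsSHIQ Rp RIA ∧ D.IsSHIQ Rp RIA
  | .all _ C | .ex _ C => C.IsSHIQ Rp RIA
  | .atleast _ R C | .atmost _ R C => SimpleRole Rp RIA R ∧ C.IsSHIQ Rp RIA

/-- Satisfiability of a concept w.r.t. a role hierarchy. -/
def Satisfiable (Rp : Set ℕ) (RIA : List (Role × Role)) (C : DLConcept) : Prop :=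
  ∃ I : Interp, I.Good Rp ∧ I.ModelsRH RIA ∧ (I.cSem C).Nonempty

/-- Subsumption of concepts w.r.t. a role hierarchy. -/
def Subsumes (Rp : Set ℕ) (RIA : List (Role × Role)) (C D : DLConcept) : Prop :=
  ∀ I : Interp, I.Good Rp → I.ModelsRH RIA → I.cSem C ⊆ I.cSem D
/-- A terminology: a finite list of general concept inclusion axioms `C ⊑ D`. -/
abbrev Terminology := List (DLConcept × DLConcept)

/-- `I` is a model of the terminology `T`. -/
def Interp.ModelsT (I : Interp) (T : Terminology) : Prop :=
  ∀ p ∈ T, I.cSem p.1 ⊆ I.cSem p.2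

/-- Satisfiability w.r.t. a terminology and a role hierarchy. -/
def SatisfiableT (Rp : Set ℕ) (RIA : List (Role × Role)) (T : Terminology)
    (C : DLConcept) : Prop :=
  ∃ I : Interp, I.Good Rp ∧ I.ModelsRH RIA ∧ I.ModelsT T ∧ (I.cSem C).Nonempty

/-- Subsumption w.r.t. a terminology and a role hierarchy. -/
def SubsumesT (Rp : Set ℕ) (RIA : List (Role × Role)) (T : Terminology)
    (C D : DLConcept) : Prop :=
  ∀ I : Interp, I.Good Rp → I.ModelsRH RIA → I.ModelsT T → I.cSem C ⊆ I.cSem D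

/-- `C_T`: the conjunction of all `¬Cᵢ ⊔ Dᵢ` for `Cᵢ ⊑ Dᵢ ∈ T`. -/
def CT (T : Terminology) : DLConcept :=
  T.foldr (fun p acc => DLConcept.and (DLConcept.or (DLConcept.neg p.1) p.2) acc) DLConcept.top

/-- The role names occurring in a concept. -/
def DLConcept.roleNames : DLConcept → Finset ℕ
  | .top | .bot | .atom _ => ∅
  | .neg C => C.roleNames
  | .and C D | .or C D => C.roleNames ∪ D.roleNames
  | .all R C | .ex R C => insert R.name C.roleNames
  | .atleast _ R C | .atmost _ R C => insert R.name C.roleNames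

/-- The role names occurring in a terminology. -/
def termRoleNames (T : Terminology) : Finset ℕ :=
  T.foldr (fun p acc => p.1.roleNames ∪ p.2.roleNames ∪ acc) ∅

/-- The role names occurring in a set of role inclusion axioms. -/
def riaRoleNames (RIA : List (Role × Role)) : Finset ℕ :=
  RIA.foldr (fun p acc => insert p.1.name (insert p.2.name acc)) ∅

/-- `R_U`: the given role inclusion axioms extended with `R ⊑ U` and
    `Inv(R) ⊑ U` for every role (name) `r` in `names`. -/
def addU (RIA : List (Role × Role)) (names : Finset ℕ) (u : ℕ) : List (Role × Role) :=
  RIA ++ (names.sort (· ≤ ·)).map (fun r => (Role.atom r, Role.atom u))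
      ++ (names.sort (· ≤ ·)).map (fun r => (Role.inv r, Role.atom u))

/-! ### Auxiliary lemmas -/

@[simp] lemma Role.name_Inv (R : Role) : R.Inv.name = R.name := by
  cases R <;> rfl

lemma mem_riaRoleNames {RIA : List (Role × Role)} {R S : Role} (h : (R, S) ∈ RIA) :
    R.name ∈ riaRoleNames RIA ∧ S.name ∈ riaRoleNames RIA := by
  induction RIA with
  | nil => simp at h
  | cons q L ih =>
    simp only [riaRoleNames, List.foldr_cons] at *
    rcases List.mem_cons.1 h with h | h
    · subst h; simp
    · have := ih h
      simp [Finset.mem_insert, this.1, this.2]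

lemma mem_addU {RIA : List (Role × Role)} {names : Finset ℕ} {u : ℕ} {R S : Role} :
    (R, S) ∈ addU RIA names u ↔
      (R, S) ∈ RIA ∨ (∃ r ∈ names, R = Role.atom r ∧ S = Role.atom u) ∨
        (∃ r ∈ names, R = Role.inv r ∧ S = Role.atom u) := by
  simp only [addU, List.mem_append, List.mem_map, Finset.mem_sort, Prod.mk.injEq]
  constructor
  · rintro ((h | ⟨r, hr, h1, h2⟩) | ⟨r, hr, h1, h2⟩)
    · exact Or.inl h
    · exact Or.inr (Or.inl ⟨r, hr, h1.symm, h2.symm⟩)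
    · exact Or.inr (Or.inr ⟨r, hr, h1.symm, h2.symm⟩)
  · rintro (h | ⟨r, hr, h1, h2⟩ | ⟨r, hr, h1, h2⟩)
    · exact Or.inl (Or.inl h)
    · exact Or.inl (Or.inr ⟨r, hr, h1.symm, h2.symm⟩)
    · exact Or.inr ⟨r, hr, h1.symm, h2.symm⟩

lemma roleNames_CT (T : Terminology) : (CT T).roleNames ⊆ termRoleNames T := by
  induction T with
  | nil => simp [CT, DLConcept.roleNames, termRoleNames]
  | cons p L ih =>
    intro r hr
    simp only [CT, List.foldr_cons, DLConcept.roleNames, termRoleNames,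
      Finset.mem_union] at hr ⊢
    rcases hr with (h | h) | h
    · tauto
    · tauto
    · have := ih h
      simp only [termRoleNames] at this
      tauto

lemma roleNames_of_mem_T {T : Terminology} {p : DLConcept × DLConcept} (h : p ∈ T) :
    p.1.roleNames ⊆ termRoleNames T ∧ p.2.roleNames ⊆ termRoleNames T := by
  induction T with
  | nil => simp at h
  | cons q L ih =>
    simp only [termRoleNames, List.foldr_cons] at *
    rcases List.mem_cons.1 h with h | h
    · subst h
      constructor <;> intro r hr <;>
        simp only [Finset.mem_union] <;> tauto
    · have := ih h
      constructor <;> intro r hr <;> simp only [Finset.mem_union]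
      · exact Or.inr (this.1 hr)
      · exact Or.inr (this.2 hr)

lemma mem_CT (I : Interp) (T : Terminology) (z : I.Dom) :
    z ∈ I.cSem (CT T) ↔ ∀ p ∈ T, z ∈ I.cSem p.1 → z ∈ I.cSem p.2 := by
  induction T with
  | nil => simp [CT, Interp.cSem]
  | cons p L ih =>
    simp only [CT, List.foldr_cons, Interp.cSem, Set.mem_inter_iff, Set.mem_union,
      Set.mem_compl_iff] at *
    constructor
    · rintro ⟨h1, h2⟩ q hq hq1
      rcases List.mem_cons.1 hq with rfl | hq
      · rcases h1 with h | h
        · exact absurd hq1 h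
        · exact h
      · exact ih.1 h2 q hq hq1
    · intro h
      refine ⟨?_, ih.2 fun q hq => h q (List.mem_cons_of_mem _ hq)⟩
      by_cases hp : z ∈ I.cSem p.1
      · exact Or.inr (h p List.mem_cons_self hp)
      · exact Or.inl hp

/-- Extension of an interpretation making role name `u` universal. -/
def extU (I : Interp) (u : ℕ) : Interp :=
  ⟨I.Dom, I.dom_nonempty, I.cI, fun r => if r = u then (fun _ _ => True) else I.rI r⟩

lemma extU_rSem (I : Interp) (u : ℕ) {R : Role} (h : R.name ≠ u) :
    (extU I u).rSem R = I.rSem R := by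
  cases R with
  | atom r =>
    simp only [Role.name] at h
    simp [extU, Interp.rSem, if_neg h]
  | inv r =>
    simp only [Role.name] at h
    funext x y
    simp [extU, Interp.rSem, if_neg h]

lemma extU_cSem (I : Interp) (u : ℕ) {D : DLConcept} (h : u ∉ D.roleNames) :
    (extU I u).cSem D = I.cSem D := by
  induction D with
  | top => rfl
  | bot => rfl
  | atom a => rfl
  | neg D ih =>
    simp only [DLConcept.roleNames] at h
    simp only [Interp.cSem, ih h]
    rfl
  | and D E ihD ihE =>
    simp only [DLConcept.roleNames, Finset.mem_union, not_or] at h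
    simp only [Interp.cSem, ihD h.1, ihE h.2]
    rfl
  | or D E ihD ihE =>
    simp only [DLConcept.roleNames, Finset.mem_union, not_or] at h
    simp only [Interp.cSem, ihD h.1, ihE h.2]
    rfl
  | all R D ih =>
    simp only [DLConcept.roleNames, Finset.mem_insert, not_or] at h
    simp only [Interp.cSem, ih h.2, extU_rSem I u (Ne.symm h.1)]
    rfl
  | ex R D ih =>
    simp only [DLConcept.roleNames, Finset.mem_insert, not_or] at h
    simp only [Interp.cSem, ih h.2, extU_rSem I u (Ne.symm h.1)]
    rfl
  | atleast n R D ih =>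
    simp only [DLConcept.roleNames, Finset.mem_insert, not_or] at h
    simp only [Interp.cSem, ih h.2, extU_rSem I u (Ne.symm h.1)]
    rfl
  | atmost n R D ih =>
    simp only [DLConcept.roleNames, Finset.mem_insert, not_or] at h
    simp only [Interp.cSem, ih h.2, extU_rSem I u (Ne.symm h.1)]
    rfl

lemma subRole_addU_of_ne {RIA : List (Role × Role)} {names : Finset ℕ} {u : ℕ}
    (hru : u ∉ riaRoleNames RIA) {R S : Role}
    (h : SubRole (addU RIA names u) R S) (hS : S.name ≠ u) :
    SubRole RIA R S ∧ R.name ≠ u := by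
  induction h with
  | refl => exact ⟨Relation.ReflTransGen.refl, hS⟩
  | @tail b c hRb hbc ih =>
    have hbc' : (b, c) ∈ RIA ∨ (b.Inv, c.Inv) ∈ RIA := by
      rcases hbc with h1 | h1
      · rcases mem_addU.1 h1 with h2 | ⟨r, _, _, rfl⟩ | ⟨r, _, _, rfl⟩
        · exact Or.inl h2
        · exact absurd rfl hS
        · exact absurd rfl hS
      · rcases mem_addU.1 h1 with h2 | ⟨r, _, _, hc⟩ | ⟨r, _, _, hc⟩
        · exact Or.inr h2
        · exfalso; apply hS; cases c <;> simp_all [Role.Inv, Role.name]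
        · exfalso; apply hS; cases c <;> simp_all [Role.Inv, Role.name]
    have hb : b.name ≠ u := by
      rcases hbc' with h1 | h1
      · intro he; exact hru (he ▸ (mem_riaRoleNames h1).1)
      · intro he; apply hru
        have := (mem_riaRoleNames h1).1
        rwa [Role.name_Inv, he] at this
    obtain ⟨h1, h2⟩ := ih hb
    exact ⟨Relation.ReflTransGen.tail h1 hbc', h2⟩

/-- Restriction of an interpretation to a nonempty subset of the domain. -/
def restrict (I : Interp) (Δ : Set I.Dom) (hne : Δ.Nonempty) : Interp :=
  ⟨Δ, hne.to_subtype, fun a => {y | y.val ∈ I.cI a}, fun r y z => I.rI r y.val z.val⟩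

lemma restrict_rSem (I : Interp) (Δ : Set I.Dom) (hne : Δ.Nonempty) (R : Role)
    (y z : (restrict I Δ hne).Dom) :
    (restrict I Δ hne).rSem R y z ↔ I.rSem R y.val z.val := by
  cases R <;> rfl

lemma restrict_cSem (I : Interp) (Δ : Set I.Dom) (hne : Δ.Nonempty) (N : Finset ℕ)
    (hcl : ∀ y ∈ Δ, ∀ R : Role, R.name ∈ N → ∀ z, I.rSem R y z → z ∈ Δ) :
    ∀ D : DLConcept, D.roleNames ⊆ N → ∀ y : (restrict I Δ hne).Dom,
      (y ∈ (restrict I Δ hne).cSem D ↔ y.val ∈ I.cSem D) := by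
  intro D
  induction D with
  | top => intro _ y; simp [Interp.cSem]
  | bot => intro _ y; simp [Interp.cSem]
  | atom a => intro _ y; simp [Interp.cSem, restrict]; rfl
  | neg D ih =>
    intro h y
    simp only [DLConcept.roleNames] at h
    simp only [Interp.cSem, Set.mem_compl_iff, ih h y]
  | and D E ihD ihE =>
    intro h y
    simp only [DLConcept.roleNames] at h
    have hD := Finset.union_subset_iff.1 h
    simp only [Interp.cSem, Set.mem_inter_iff, ihD hD.1 y, ihE hD.2 y]
  | or D E ihD ihE =>
    intro h y
    simp only [DLConcept.roleNames] at h
    have hD := Finset.union_subset_iff.1 h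
    simp only [Interp.cSem, Set.mem_union, ihD hD.1 y, ihE hD.2 y]
  | all R D ih =>
    intro h y
    simp only [DLConcept.roleNames, Finset.insert_subset_iff] at h
    simp only [Interp.cSem, Set.mem_setOf_eq]
    constructor
    · intro hy z hz
      have hzΔ : z ∈ Δ := hcl y.val y.2 R h.1 z hz
      have := hy ⟨z, hzΔ⟩ ((restrict_rSem I Δ hne R y ⟨z, hzΔ⟩).2 hz)
      exact (ih h.2 ⟨z, hzΔ⟩).1 this
    · intro hy z hz
      exact (ih h.2 z).2 (hy z.val ((restrict_rSem I Δ hne R y z).1 hz))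
  | ex R D ih =>
    intro h y
    simp only [DLConcept.roleNames, Finset.insert_subset_iff] at h
    simp only [Interp.cSem, Set.mem_setOf_eq]
    constructor
    · rintro ⟨z, hz1, hz2⟩
      exact ⟨z.val, (restrict_rSem I Δ hne R y z).1 hz1, (ih h.2 z).1 hz2⟩
    · rintro ⟨z, hz1, hz2⟩
      have hzΔ : z ∈ Δ := hcl y.val y.2 R h.1 z hz1
      exact ⟨⟨z, hzΔ⟩, (restrict_rSem I Δ hne R y ⟨z, hzΔ⟩).2 hz1,
        (ih h.2 ⟨z, hzΔ⟩).2 hz2⟩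
  | atleast n R D ih =>
    intro h y
    simp only [DLConcept.roleNames, Finset.insert_subset_iff] at h
    simp only [Interp.cSem, Set.mem_setOf_eq]
    have hcard : Cardinal.mk {z // (restrict I Δ hne).rSem R y z ∧
        z ∈ (restrict I Δ hne).cSem D} =
        Cardinal.mk {z // I.rSem R y.val z ∧ z ∈ I.cSem D} := by
      refine Cardinal.mk_congr ⟨fun p => ⟨p.1.val,
        (restrict_rSem I Δ hne R y p.1).1 p.2.1, (ih h.2 p.1).1 p.2.2⟩,
        fun p => ⟨⟨p.1, hcl y.val y.2 R h.1 p.1 p.2.1⟩,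
          (restrict_rSem I Δ hne R y _).2 p.2.1,
          (ih h.2 ⟨p.1, hcl y.val y.2 R h.1 p.1 p.2.1⟩).2 p.2.2⟩,
        fun p => by ext; rfl, fun p => by ext; rfl⟩
    rw [hcard]
  | atmost n R D ih =>
    intro h y
    simp only [DLConcept.roleNames, Finset.insert_subset_iff] at h
    simp only [Interp.cSem, Set.mem_setOf_eq]
    have hcard : Cardinal.mk {z // (restrict I Δ hne).rSem R y z ∧
        z ∈ (restrict I Δ hne).cSem D} =
        Cardinal.mk {z // I.rSem R y.val z ∧ z ∈ I.cSem D} := by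
      refine Cardinal.mk_congr ⟨fun p => ⟨p.1.val,
        (restrict_rSem I Δ hne R y p.1).1 p.2.1, (ih h.2 p.1).1 p.2.2⟩,
        fun p => ⟨⟨p.1, hcl y.val y.2 R h.1 p.1 p.2.1⟩,
          (restrict_rSem I Δ hne R y _).2 p.2.1,
          (ih h.2 ⟨p.1, hcl y.val y.2 R h.1 p.1 p.2.1⟩).2 p.2.2⟩,
        fun p => by ext; rfl, fun p => by ext; rfl⟩
    rw [hcard]

/-- **Internalisation, satisfiability.** Let `T` be a terminology, `RIA` a
set of role inclusion axioms, `C` a SHIQ-concept, `C_T` the conjunction of all `¬Cᵢ ⊔ Dᵢ`,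
and `U = u` a transitive role name not occurring in `T`, `C` or `RIA`. Then `C` is
satisfiable w.r.t. `T` and `R⁺` iff `C ⊓ C_T ⊓ ∀U.C_T` is satisfiable w.r.t. `R_U⁺`. -/
theorem internalisation_sat (Rp : Set ℕ) (RIA : List (Role × Role)) (T : Terminology)
    (C : DLConcept) (hC : C.IsSHIQ Rp RIA)
    (hT : ∀ p ∈ T, p.1.IsSHIQ Rp RIA ∧ p.2.IsSHIQ Rp RIA)
    (u : ℕ) (hu : u ∈ Rp)
    (hfresh : u ∉ C.roleNames ∪ termRoleNames T ∪ riaRoleNames RIA) :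
    SatisfiableT Rp RIA T C ↔
      Satisfiable Rp (addU RIA (C.roleNames ∪ termRoleNames T ∪ riaRoleNames RIA) u)
        (DLConcept.and (DLConcept.and C (CT T)) (DLConcept.all (Role.atom u) (CT T))) := by
  simp only [Finset.mem_union, not_or] at hfresh
  set names : Finset ℕ := C.roleNames ∪ termRoleNames T ∪ riaRoleNames RIA with hnames
  obtain ⟨⟨huC, huT⟩, huR⟩ := hfresh
  constructor
  · -- forward direction: interpret u as the universal relation
    rintro ⟨I, hGood, hRH, hMT, x, hx⟩
    refine ⟨extU I u, ?_, ?_, x, ?_⟩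
    · intro r hr
      by_cases h : r = u
      · subst h
        intro a b c _ _
        simp [extU]
      · intro a b c hab hbc
        simp only [extU, if_neg h] at *
        exact hGood r hr hab hbc
    · intro R S hRS x y hxy
      by_cases hS : S.name = u
      · cases S <;> simp [Role.name] at hS <;> subst hS <;>
          simp [extU, Interp.rSem]
      · obtain ⟨h1, h2⟩ := subRole_addU_of_ne huR hRS hS
        rw [extU_rSem I u h2] at hxy
        rw [extU_rSem I u hS]
        exact hRH R S h1 x y hxy
    · have hCT : ∀ z : I.Dom, z ∈ I.cSem (CT T) := by
        intro z
        exact (mem_CT I T z).2 fun p hp hz => hMT p hp hz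
      have hCTu : u ∉ (CT T).roleNames := fun h => huT (roleNames_CT T h)
      refine ⟨⟨?_, ?_⟩, ?_⟩
      · rw [extU_cSem I u huC]; exact hx
      · show x ∈ (extU I u).cSem (CT T)
        rw [extU_cSem I u hCTu]; exact hCT x
      · intro y _
        show y ∈ (extU I u).cSem (CT T)
        rw [extU_cSem I u hCTu]; exact hCT y
  · -- backward direction: restrict to {x} ∪ u-successors of x
    rintro ⟨I, hGood, hRH, x, hx⟩
    obtain ⟨⟨hx1, hx2⟩, hx3⟩ := hx
    set Δ : Set I.Dom := {y | y = x ∨ I.rI u x y} with hΔdef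
    have hxΔ : x ∈ Δ := Or.inl rfl
    have hne : Δ.Nonempty := ⟨x, hxΔ⟩
    -- a role with name in `names` is a subrole of `atom u`
    have hsub : ∀ R : Role, R.name ∈ names → SubRole (addU RIA names u) R (Role.atom u) := by
      intro R hR
      cases R with
      | atom r =>
        exact Relation.ReflTransGen.single
          (Or.inl (mem_addU.2 (Or.inr (Or.inl ⟨r, hR, rfl, rfl⟩))))
      | inv r =>
        exact Relation.ReflTransGen.single
          (Or.inl (mem_addU.2 (Or.inr (Or.inr ⟨r, hR, rfl, rfl⟩))))
    have hcl : ∀ y ∈ Δ, ∀ R : Role, R.name ∈ names → ∀ z, I.rSem R y z → z ∈ Δ := by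
      intro y hy R hR z hz
      have huz : I.rI u y z := hRH R (Role.atom u) (hsub R hR) y z hz
      rcases hy with rfl | hy
      · exact Or.inr huz
      · exact Or.inr (hGood u hu hy huz)
    have hCTall : ∀ y ∈ Δ, y ∈ I.cSem (CT T) := by
      intro y hy
      rcases hy with rfl | hy
      · exact hx2
      · exact hx3 y hy
    have hCnames : C.roleNames ⊆ names := by
      intro r hr; exact Finset.mem_union.2 (Or.inl (Finset.mem_union.2 (Or.inl hr)))
    have hTnames : ∀ p ∈ T, p.1.roleNames ⊆ names ∧ p.2.roleNames ⊆ names := by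
      intro p hp
      obtain ⟨h1, h2⟩ := roleNames_of_mem_T hp
      constructor <;> intro r hr
      · exact Finset.mem_union.2 (Or.inl (Finset.mem_union.2 (Or.inr (h1 hr))))
      · exact Finset.mem_union.2 (Or.inl (Finset.mem_union.2 (Or.inr (h2 hr))))
    refine ⟨restrict I Δ hne, ?_, ?_, ?_, ⟨x, hxΔ⟩, ?_⟩
    · intro r hr a b c hab hbc
      exact hGood r hr hab hbc
    · intro R S hRS y z hyz
      have hRS' : SubRole (addU RIA names u) R S := by
        refine Relation.ReflTransGen.mono ?_ _ _ hRS
        intro a b hab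
        rcases hab with h | h
        · exact Or.inl (mem_addU.2 (Or.inl h))
        · exact Or.inr (mem_addU.2 (Or.inl h))
      rw [restrict_rSem] at hyz ⊢
      exact hRH R S hRS' y.val z.val hyz
    · intro p hp y hy
      obtain ⟨h1, h2⟩ := hTnames p hp
      rw [restrict_cSem I Δ hne names hcl p.1 h1 y] at hy
      rw [restrict_cSem I Δ hne names hcl p.2 h2 y]
      exact (mem_CT I T y.val).1 (hCTall y.val y.2) p hp hy
    · exact (restrict_cSem I Δ hne names hcl C hCnames ⟨x, hxΔ⟩).2 hx1
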